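/- arXiv:2201.11965 — 4 statements merged into one kernel-verified Lean document; each statement's English description precedes it below -/
import Mathlib

section
/- Let π* and π be probability distributions on a finite action set A, and let Q: A → [0, H] be a bounded function. Define π'(a) ∝ π(a)·exp(α·Q(a)) for α > 0. Then ⟨Q, π* − π⟩ ≤ (α H²)/2 + (1/α)·(KL(π* ‖ π) − KL(π* ‖ π')). -/
/-!
The Gibbs update `π' = π e^{αQ} / Z` turns the KL difference into a linear term minus a
log-partition function: `KL(π* ‖ π) - KL(π* ‖ π') = α ⟨Q, π*⟩ - log Z`. Since `αQ` takes values
in `[0, αH]`, the bound `e^x ≤ 1 + x + x²/2` for `x ≤ 0`, applied to `αQ - αH`, gives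
`log Z ≤ α ⟨Q, π⟩ + α²H²/2`; combining the two and dividing by `α` is the claim.
-/

open Finset Real

theorem Real.exp_le_one_add_add_sq_div_two_of_nonpos {x : ℝ} (hx : x ≤ 0) :
    exp x ≤ 1 + x + x ^ 2 / 2 := by
  have hanti : Antitone fun y : ℝ => 1 + y + y ^ 2 / 2 - exp y := by
    refine antitone_of_deriv_nonpos (by fun_prop) fun y => ?_
    have hderiv : HasDerivAt (fun y : ℝ => 1 + y + y ^ 2 / 2 - exp y) (1 + y - exp y) y := by
      have hquad := ((hasDerivAt_id y).const_add 1).add ((hasDerivAt_pow 2 y).div_const 2)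
      exact (hquad.congr_deriv (by simp)).sub (hasDerivAt_exp y)
    rw [hderiv.deriv]
    linarith [add_one_le_exp y]
  simpa using hanti hx

section Finite

variable {A : Type*} [Fintype A]

/-- A quadratic (non-sharp) form of Hoeffding's lemma for a finitely supported distribution. -/
theorem log_sum_mul_exp_le (p X : A → ℝ) {m M : ℝ} (hp0 : ∀ a, 0 ≤ p a) (hp1 : ∑ a, p a = 1)
    (hXm : ∀ a, m ≤ X a) (hXM : ∀ a, X a ≤ M) :
    log (∑ a, p a * exp (X a)) ≤ ∑ a, p a * X a + (M - m) ^ 2 / 2 := by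
  have hshift : ∀ a, exp (X a - M) ≤ 1 + (X a - M) + (M - m) ^ 2 / 2 := fun a => by
    have hsq : (X a - M) ^ 2 ≤ (M - m) ^ 2 := by nlinarith [hXm a, hXM a]
    linarith [exp_le_one_add_add_sq_div_two_of_nonpos (sub_nonpos.2 (hXM a))]
  have hlower : exp m ≤ ∑ a, p a * exp (X a) := calc
    exp m = ∑ a, p a * exp m := by rw [← sum_mul, hp1, one_mul]
    _ ≤ ∑ a, p a * exp (X a) :=
      sum_le_sum fun a _ => mul_le_mul_of_nonneg_left (exp_le_exp.2 (hXm a)) (hp0 a)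
  rw [log_le_iff_le_exp ((exp_pos m).trans_le hlower)]
  calc ∑ a, p a * exp (X a) = exp M * ∑ a, p a * exp (X a - M) := by
        rw [mul_sum]
        refine sum_congr rfl fun a _ => ?_
        rw [exp_sub]
        field_simp
    _ ≤ exp M * ∑ a, p a * (1 + (X a - M) + (M - m) ^ 2 / 2) := by
        gcongr with a
        exacts [hp0 a, hshift a]
    _ = exp M * (1 + (∑ a, p a * X a - M + (M - m) ^ 2 / 2)) := by
        simp only [mul_add, mul_sub, sum_add_distrib, sum_sub_distrib, ← sum_mul, hp1]
        ring
    _ ≤ exp M * exp (∑ a, p a * X a - M + (M - m) ^ 2 / 2) := by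
        gcongr
        linarith [add_one_le_exp (∑ a, p a * X a - M + (M - m) ^ 2 / 2)]
    _ = exp (∑ a, p a * X a + (M - m) ^ 2 / 2) := by
        rw [← exp_add]
        ring_nf

theorem sum_mul_log_div_sub_sum_mul_log_div_of_gibbs {q p p' X : A → ℝ} (hq0 : ∀ a, 0 ≤ q a)
    (hq1 : ∑ a, q a = 1) (hp0 : ∀ a, 0 < p a)
    (hp' : ∀ a, p' a = p a * exp (X a) / ∑ b, p b * exp (X b)) :
    ∑ a, q a * log (q a / p a) - ∑ a, q a * log (q a / p' a) =
      ∑ a, q a * X a - log (∑ b, p b * exp (X b)) := by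
  set Z := ∑ b, p b * exp (X b)
  have hterm : ∀ a, q a * log (q a / p a) - q a * log (q a / p' a) = q a * (X a - log Z) := by
    intro a
    rcases (hq0 a).eq_or_lt with hq | hq
    · simp [← hq]
    have hZ : 0 < Z := sum_pos (fun b _ => mul_pos (hp0 b) (exp_pos _)) ⟨a, mem_univ a⟩
    have hpe : 0 < p a * exp (X a) := mul_pos (hp0 a) (exp_pos _)
    rw [log_div hq.ne' (hp0 a).ne', log_div hq.ne' (hp' a ▸ div_pos hpe hZ).ne', hp' a,
      log_div hpe.ne' hZ.ne', log_mul (hp0 a).ne' (exp_pos _).ne', log_exp]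
    ring
  rw [← sum_sub_distrib, sum_congr rfl fun a _ => hterm a]
  simp only [mul_sub, sum_sub_distrib, ← sum_mul, hq1, one_mul]

end Finite

theorem stmt0_general {A : Type*} [Fintype A]
    (H α : ℝ) (hα : 0 < α) (Q : A → ℝ)
    (hQ0 : ∀ a, 0 ≤ Q a) (hQH : ∀ a, Q a ≤ H)
    (pstar p p' : A → ℝ)
    (hps0 : ∀ a, 0 ≤ pstar a) (hps1 : ∑ a, pstar a = 1)
    (hp0 : ∀ a, 0 < p a) (hp1 : ∑ a, p a = 1)
    (hp' : ∀ a, p' a = p a * Real.exp (α * Q a) / ∑ b, p b * Real.exp (α * Q b)) :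
    ∑ a, Q a * (pstar a - p a) ≤
      α * H ^ 2 / 2 +
        (1 / α) * ((∑ a, pstar a * Real.log (pstar a / p a)) -
          (∑ a, pstar a * Real.log (pstar a / p' a))) := by
  have hlogZ := log_sum_mul_exp_le p (fun a => α * Q a) (fun a => (hp0 a).le) hp1
    (fun a => mul_nonneg hα.le (hQ0 a)) (fun a => mul_le_mul_of_nonneg_left (hQH a) hα.le)
  have hlin : ∀ r : A → ℝ, ∑ a, r a * (α * Q a) = α * ∑ a, Q a * r a := fun r => by
    rw [mul_sum]
    exact sum_congr rfl fun a _ => by ring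
  have hlogZ' : α⁻¹ * log (∑ b, p b * exp (α * Q b)) ≤ ∑ a, Q a * p a + α * H ^ 2 / 2 := by
    rw [hlin, sub_zero] at hlogZ
    rw [inv_mul_le_iff₀ hα]
    linarith
  rw [sum_mul_log_div_sub_sum_mul_log_div_of_gibbs hps0 hps1 hp0 hp', hlin, one_div, mul_sub,
    inv_mul_cancel_left₀ hα.ne']
  simp only [mul_sub, sum_sub_distrib]
  linarith

/-- One-step descent lemma (mirror descent / exponentiated gradient step). -/
theorem stmt0 {A : Type*} [Fintype A] [Nonempty A]
    (H α : ℝ) (hα : 0 < α) (Q : A → ℝ)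
    (hQ0 : ∀ a, 0 ≤ Q a) (hQH : ∀ a, Q a ≤ H)
    (pstar p p' : A → ℝ)
    (hps0 : ∀ a, 0 ≤ pstar a) (hps1 : ∑ a, pstar a = 1)
    (hp0 : ∀ a, 0 < p a) (hp1 : ∑ a, p a = 1)
    (hp' : ∀ a, p' a = p a * Real.exp (α * Q a) / ∑ b, p b * Real.exp (α * Q b)) :
    ∑ a, Q a * (pstar a - p a) ≤
      α * H ^ 2 / 2 +
        (1 / α) * ((∑ a, pstar a * Real.log (pstar a / p a)) -
          (∑ a, pstar a * Real.log (pstar a / p' a))) :=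
  stmt0_general H α hα Q hQ0 hQH pstar p p' hps0 hps1 hp0 hp1 hp'
end

section
/- Let Λ_t = λI + Σ_{i=1}^t φ_i φ_iᵀ where φ_i ∈ ℝ^d and λ > 0. Then Σ_{i=1}^t φ_iᵀ (Λ_t)^{-1} φ_i ≤ d. -/
/-! Writing G = ∑ φᵢ φᵢᵀ and Λ = λ • 1 + G, the sum is tr (Λ⁻¹ G) = tr (1 - λ Λ⁻¹) = d - λ tr Λ⁻¹,
and tr Λ⁻¹ ≥ 0 because Λ, hence Λ⁻¹, is positive definite. -/

open Matrix

namespace Matrix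

variable {n ι R : Type*} [Fintype n]

theorem sum_dotProduct_mulVec_eq_trace_mul_sum_vecMulVec [CommSemiring R] [Fintype ι]
    (A : Matrix n n R) (v : ι → n → R) :
    ∑ i, v i ⬝ᵥ (A *ᵥ v i) = trace (A * ∑ i, vecMulVec (v i) (v i)) := by
  simp_rw [Finset.mul_sum, trace_sum, mul_vecMulVec, trace_vecMulVec, dotProduct_comm]

theorem trace_inv_mul_sub_smul_one [DecidableEq n] [Field R] {A : Matrix n n R}
    (hA : IsUnit A) (c : R) :
    trace (A⁻¹ * (A - c • 1)) = Fintype.card n - c * trace A⁻¹ := by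
  rw [mul_sub, nonsing_inv_mul _ ((isUnit_iff_isUnit_det A).mp hA), Matrix.mul_smul, mul_one,
    trace_sub, trace_one, trace_smul, smul_eq_mul]

theorem trace_inv_smul_one_add_mul_le_card [DecidableEq n] [Field R] [PartialOrder R]
    [StarRing R] [StarOrderedRing R] {G : Matrix n n R} (hG : G.PosSemidef) {c : R}
    (hc : 0 < c) : trace ((c • 1 + G)⁻¹ * G) ≤ Fintype.card n := by
  have hΛ : (c • 1 + G).PosDef := (PosDef.one.smul hc).add_posSemidef hG
  have hid := trace_inv_mul_sub_smul_one hΛ.isUnit c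
  rw [add_sub_cancel_left] at hid
  rw [hid, sub_le_self_iff, ← smul_eq_mul, ← trace_smul]
  exact (hΛ.posSemidef.inv.smul hc.le).trace_nonneg

end Matrix

/-- Lemma D.1 of Jin et al. 2020: trace-type bound for the regularized Gram matrix. -/
theorem stmt7 (d t : ℕ) (lam : ℝ) (hlam : 0 < lam)
    (φ : Fin t → Fin d → ℝ) :
    ∑ i, φ i ⬝ᵥ
        ((lam • (1 : Matrix (Fin d) (Fin d) ℝ) +
            ∑ j, Matrix.vecMulVec (φ j) (φ j))⁻¹ *ᵥ φ i) ≤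
      (d : ℝ) := by
  have hG : (∑ j, vecMulVec (φ j) (φ j)).PosSemidef :=
    posSemidef_sum _ fun j _ ↦ by simpa using posSemidef_vecMulVec_self_star (φ j)
  rw [sum_dotProduct_mulVec_eq_trace_mul_sum_vecMulVec]
  simpa using trace_inv_smul_one_add_mul_le_card hG hlam
end

section
/- Let {φ_t}_{t≥1} be vectors in ℝ^d with ‖φ_t‖₂ ≤ 1, let Λ_0 be positive definite with λ_min(Λ_0) ≥ 1, and define Λ_t = Λ_0 + Σ_{i=1}^{t−1} φ_i φ_iᵀ. Then for every t ≥ 1: log(det(Λ_{t+1})/det(Λ_1)) ≤ Σ_{i=1}^t φ_iᵀ Λ_i^{-1} φ_i ≤ 2 log(det(Λ_{t+1})/det(Λ_1)). -/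
/-!
By the matrix determinant lemma each rank-one update multiplies the determinant by `1 + xᵢ`,
where `xᵢ = φᵢᵀ Λᵢ⁻¹ φᵢ`, so `log (det Λ_{t+1} / det Λ₁) = ∑ log (1 + xᵢ)`. With `y = Λᵢ⁻¹ φᵢ`,
`Λᵢ ≥ 1` gives `‖y‖² ≤ yᵀ Λᵢ y = xᵢ`, and Cauchy–Schwarz `xᵢ² ≤ ‖φᵢ‖² ‖y‖²` then gives
`0 ≤ xᵢ ≤ ‖φᵢ‖² ≤ 1`. On `[0, 1]` (indeed `[0, 2]`), `log (1 + x) ≤ x` and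
`2x / (x + 2) ≤ log (1 + x)` give `log (1 + x) ≤ x ≤ 2 log (1 + x)`.
-/

open Matrix Finset

namespace Matrix

variable {n : Type*} [DecidableEq n]

theorem posDef_of_posSemidef_sub_one {A : Matrix n n ℝ} (hA : (A - 1).PosSemidef) : A.PosDef := by
  simpa using PosDef.posSemidef_add hA PosDef.one

variable [Fintype n]

theorem det_add_vecMulVec {R : Type*} [CommRing R] {A : Matrix n n R} (hA : IsUnit A.det)
    (u v : n → R) : (A + vecMulVec u v).det = A.det * (1 + v ⬝ᵥ (A⁻¹ *ᵥ u)) := by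
  rw [vecMulVec_eq Unit, det_add_replicateCol_mul_replicateRow hA, Matrix.mul_assoc,
    ← replicateCol_mulVec]
  simp [det_unique]

theorem det_eq_det_mul_prod_of_add_vecMulVec {R : Type*} [CommRing R] {A : ℕ → Matrix n n R}
    {u v : ℕ → n → R} {s : ℕ} (hA : ∀ i ≥ s, IsUnit (A i).det)
    (hstep : ∀ i ≥ s, A (i + 1) = A i + vecMulVec (u i) (v i)) {t : ℕ} (hst : s ≤ t) :
    (A t).det = (A s).det * ∏ i ∈ Ico s t, (1 + v i ⬝ᵥ ((A i)⁻¹ *ᵥ u i)) := by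
  induction t, hst using Nat.le_induction with
  | base => simp
  | succ t hst ih =>
    rw [hstep t hst, det_add_vecMulVec (hA t hst), ih, prod_Ico_succ_top hst, mul_assoc]

theorem dotProduct_inv_mulVec_nonneg {A : Matrix n n ℝ} (hA : (A - 1).PosSemidef) (u : n → ℝ) :
    0 ≤ u ⬝ᵥ (A⁻¹ *ᵥ u) := by
  simpa using (posDef_of_posSemidef_sub_one hA).inv.posSemidef.dotProduct_mulVec_nonneg u

theorem dotProduct_inv_mulVec_le_dotProduct_self {A : Matrix n n ℝ} (hA : (A - 1).PosSemidef)
    (u : n → ℝ) : u ⬝ᵥ (A⁻¹ *ᵥ u) ≤ u ⬝ᵥ u := by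
  set y := A⁻¹ *ᵥ u
  have hAy : A *ᵥ y = u := by
    rw [mulVec_mulVec, mul_nonsing_inv _ (posDef_of_posSemidef_sub_one hA).det_pos.ne'.isUnit,
      one_mulVec]
  have hyy : y ⬝ᵥ y ≤ u ⬝ᵥ y := by
    have := hA.dotProduct_mulVec_nonneg y
    rw [star_trivial, sub_mulVec, one_mulVec, hAy, dotProduct_sub, dotProduct_comm y u] at this
    linarith
  have hcs : (u ⬝ᵥ y) ^ 2 ≤ (u ⬝ᵥ u) * (y ⬝ᵥ y) := by
    simpa [dotProduct, pow_two] using sum_mul_sq_le_sq_mul_sq univ u y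
  have huu : 0 ≤ u ⬝ᵥ u := by simpa using dotProduct_star_self_nonneg u
  nlinarith [dotProduct_inv_mulVec_nonneg hA u]

end Matrix

theorem Real.le_two_mul_log_one_add {x : ℝ} (h0 : 0 ≤ x) (h2 : x ≤ 2) :
    x ≤ 2 * Real.log (1 + x) := by
  have h := Real.le_log_one_add_of_nonneg h0
  rw [div_le_iff₀ (by linarith)] at h
  nlinarith

/-- Elliptical potential lemma. -/
theorem stmt8 (d : ℕ) (Λ0 : Matrix (Fin d) (Fin d) ℝ)
    (hΛ0 : (Λ0 - 1).PosSemidef)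
    (φ : ℕ → Fin d → ℝ) (hφ : ∀ i, Real.sqrt (∑ j, (φ i j) ^ 2) ≤ 1)
    (Λ : ℕ → Matrix (Fin d) (Fin d) ℝ)
    (hΛ : ∀ t, Λ t = Λ0 + ∑ i ∈ Finset.Ico 1 t, Matrix.vecMulVec (φ i) (φ i)) :
    ∀ t ≥ 1,
      Real.log ((Λ (t + 1)).det / (Λ 1).det) ≤
          ∑ i ∈ Finset.Icc 1 t, φ i ⬝ᵥ ((Λ i)⁻¹ *ᵥ φ i) ∧
        ∑ i ∈ Finset.Icc 1 t, φ i ⬝ᵥ ((Λ i)⁻¹ *ᵥ φ i) ≤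
          2 * Real.log ((Λ (t + 1)).det / (Λ 1).det) := by
  intro t ht
  set x : ℕ → ℝ := fun i => φ i ⬝ᵥ ((Λ i)⁻¹ *ᵥ φ i)
  have hge : ∀ s, (Λ s - 1).PosSemidef := fun s => by
    rw [hΛ, add_sub_right_comm]
    exact hΛ0.add (posSemidef_sum _ fun i _ => by
      simpa using posSemidef_vecMulVec_self_star (φ i))
  have hx : ∀ i, 0 ≤ x i ∧ x i ≤ 1 := fun i =>
    ⟨dotProduct_inv_mulVec_nonneg (hge i) (φ i),
      (dotProduct_inv_mulVec_le_dotProduct_self (hge i) (φ i)).trans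
        (by simpa [dotProduct, pow_two] using hφ i)⟩
  have hpos : ∀ i, 0 < 1 + x i := fun i => by linarith [(hx i).1]
  have hdet := det_eq_det_mul_prod_of_add_vecMulVec (u := φ) (v := φ)
    (fun i _ => (posDef_of_posSemidef_sub_one (hge i)).det_pos.ne'.isUnit)
    (fun i hi => by rw [hΛ, hΛ, sum_Ico_succ_top hi, add_assoc]) (by omega : 1 ≤ t + 1)
  have hlog : Real.log ((Λ (t + 1)).det / (Λ 1).det) = ∑ i ∈ Icc 1 t, Real.log (1 + x i) := by
    rw [hdet, mul_div_cancel_left₀ _ (posDef_of_posSemidef_sub_one (hge 1)).det_pos.ne',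
      Ico_add_one_right_eq_Icc, Real.log_prod fun i _ => (hpos i).ne']
  rw [hlog, mul_sum]
  exact ⟨sum_le_sum fun i _ => by simpa using Real.log_le_sub_one_of_pos (hpos i),
    sum_le_sum fun i _ => Real.le_two_mul_log_one_add (hx i).1 (by linarith [(hx i).2])⟩
end

section
/- Let M be a finite-horizon MDP with horizon H over state space S and finite action set A, with transition kernels P_h and reward r_h. Let π* = {π*_h} and π = {π_h} be two policies, and let {Q_h: S×A → ℝ, V_h: S → ℝ} be arbitrary estimated functions with V_{H+1} = 0 and V_h(x) = ⟨Q_h(x,·), π_h(·|x)⟩. Define the model prediction error ι_h := r_h + P_h V_{h+1} − Q_h. Then V_1^{π*}(x₁) − V_1(x₁) = Σ_{h=1}^H E_{π*,P}[⟨Q_h(x_h,·), π*_h(·|x_h) − π_h(·|x_h)⟩] + Σ_{h=1}^H E_{π*,P}[ι_h(x_h, a_h)], where the expectation is over trajectories generated by π* under P starting from x₁, and V_1^{π*} is the true value function of π*. -/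
open Finset

lemma tele9 (f : ℕ → ℝ) (H : ℕ) :
    ∑ h ∈ Finset.Icc 1 H, (f h - f (h + 1)) = f 1 - f (H + 1) := by
  induction H with
  | zero => simp
  | succ n ih =>
    rw [Finset.sum_Icc_succ_top (Nat.le_add_left 1 n), ih]
    ring

/-- Performance-difference lemma with model prediction error. -/
theorem stmt9 {S A : Type*} [Fintype S] [DecidableEq S] [Fintype A] (H : ℕ)
    (P : ℕ → S → A → S → ℝ) (r : ℕ → S → A → ℝ)
    (πs π : ℕ → S → A → ℝ)
    (hP0 : ∀ h x a x', 0 ≤ P h x a x') (hP1 : ∀ h x a, ∑ x', P h x a x' = 1)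
    (hπs0 : ∀ h x a, 0 ≤ πs h x a) (hπs1 : ∀ h x, ∑ a, πs h x a = 1)
    (hπ0 : ∀ h x a, 0 ≤ π h x a) (hπ1 : ∀ h x, ∑ a, π h x a = 1)
    (Q : ℕ → S → A → ℝ) (V : ℕ → S → ℝ)
    (hVend : ∀ x, V (H + 1) x = 0)
    (hV : ∀ h ∈ Finset.Icc 1 H, ∀ x, V h x = ∑ a, Q h x a * π h x a)
    (Vstar : ℕ → S → ℝ)
    (hVstarend : ∀ x, Vstar (H + 1) x = 0)
    (hVstar : ∀ h ∈ Finset.Icc 1 H, ∀ x,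
      Vstar h x = ∑ a, πs h x a * (r h x a + ∑ x', P h x a x' * Vstar (h + 1) x'))
    (x₁ : S) (docc : ℕ → S → ℝ)
    (hd1 : ∀ x, docc 1 x = if x = x₁ then 1 else 0)
    (hd : ∀ h x', docc (h + 1) x' = ∑ x, ∑ a, docc h x * πs h x a * P h x a x')
    (ι : ℕ → S → A → ℝ)
    (hι : ∀ h x a,
      ι h x a = r h x a + (∑ x', P h x a x' * V (h + 1) x') - Q h x a) :
    Vstar 1 x₁ - V 1 x₁ =
      (∑ h ∈ Finset.Icc 1 H, ∑ x, docc h x * ∑ a, Q h x a * (πs h x a - π h x a)) +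
        ∑ h ∈ Finset.Icc 1 H, ∑ x, docc h x * ∑ a, πs h x a * ι h x a := by
  set F : ℕ → ℝ := fun h => ∑ x, docc h x * (Vstar h x - V h x) with hF
  -- Step 1: LHS = F 1
  have h1 : Vstar 1 x₁ - V 1 x₁ = F 1 := by
    simp only [hF, hd1, ite_mul, one_mul, zero_mul]
    rw [Finset.sum_ite_eq' Finset.univ x₁ (fun x => Vstar 1 x - V 1 x)]
    simp
  rw [h1]
  -- Step 2: telescope
  have hend : F (H + 1) = 0 := by
    simp [hF, hVstarend, hVend]
  have htel : F 1 = ∑ h ∈ Finset.Icc 1 H, (F h - F (h + 1)) := by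
    rw [tele9 F H, hend, sub_zero]
  rw [htel, ← Finset.sum_add_distrib]
  apply Finset.sum_congr rfl
  intro h hh
  -- per-step identity
  have hx : ∀ x, Vstar h x - V h x =
      (∑ a, Q h x a * (πs h x a - π h x a)) + (∑ a, πs h x a * ι h x a)
        + ∑ a, πs h x a * ∑ x', P h x a x' * (Vstar (h + 1) x' - V (h + 1) x') := by
    intro x
    rw [hVstar h hh x, hV h hh x]
    have hc : ∑ a, Q h x a * πs h x a = ∑ a, πs h x a * Q h x a :=
      Finset.sum_congr rfl fun a _ => mul_comm _ _
    simp only [hι, mul_sub, mul_add, Finset.sum_sub_distrib, Finset.sum_add_distrib,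
      Finset.mul_sum]
    rw [hc]
    ring
  have hFnext : F (h + 1) =
      ∑ x, docc h x * ∑ a, πs h x a * ∑ x', P h x a x' * (Vstar (h + 1) x' - V (h + 1) x') := by
    simp only [hF, hd, Finset.sum_mul, Finset.mul_sum]
    rw [Finset.sum_comm]
    apply Finset.sum_congr rfl; intro x _
    rw [Finset.sum_comm]
    apply Finset.sum_congr rfl; intro a _
    apply Finset.sum_congr rfl; intro x' _
    ring
  have hFh : F h = (∑ x, docc h x * ∑ a, Q h x a * (πs h x a - π h x a))
      + (∑ x, docc h x * ∑ a, πs h x a * ι h x a) + F (h + 1) := by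
    rw [hFnext, hF]
    simp only [hx]
    rw [← Finset.sum_add_distrib, ← Finset.sum_add_distrib]
    apply Finset.sum_congr rfl; intro x _
    ring
  rw [hFh]; ring
end
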